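/- Let p and p1 be primes, n and n1 positive integers, and 1 ≤ c < p1^{n1} − 1. Let A be a generalized quasi-Florentine rectangle of size K × L over Z_N with K = min{p^n, p1^{n1}}, L = (p^n − 1)(p1^{n1} − c) and N = p^n p1^{n1}, and let B be a Butson-type Hadamard matrix BH(N, r). Then the set C of Construction 2 is an aperiodic (K, p^n p1^{n1}, (p^n − 1)(p1^{n1} − c), p^n p1^{n1}, Π)-DRCS set with Π = (−(p^n − 1)(p1^{n1} − c), (p^n − 1)(p1^{n1} − c)) × (−(p^n − 1)(p1^{n1} − c), (p^n − 1)(p1^{n1} − c)); that is, θ̂_max(C) ≤ p^n p1^{n1}. -/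

import Mathlib

/-- Generalized quasi-Florentine rectangle of size `s × n` over `ZMod N`:
each row has pairwise distinct entries (C1), and for every ordered pair of
distinct symbols and every step `m` with `1 ≤ m < n`, at most one row contains
the pair at distance `m` (C2). -/
def IsGQFR (N s n : ℕ) (A : ℕ → ℕ → ZMod N) : Prop :=
  (∀ i < s, ∀ j < n, ∀ k < n, A i j = A i k → j = k) ∧
  (∀ a b : ZMod N, a ≠ b → ∀ m : ℕ, 1 ≤ m → m < n →
    ∀ i < s, ∀ p < s,
      (∃ j, j + m < n ∧ A i j = a ∧ A i (j + m) = b) →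
      (∃ j, j + m < n ∧ A p j = a ∧ A p (j + m) = b) → i = p)

/-- Aperiodic cross-ambiguity function of two length-`L` sequences at integer
delay `τ` and integer Doppler `ν`. -/
noncomputable def apAF (L : ℕ) (a b : ℕ → ℂ) (τ ν : ℤ) : ℂ :=
  if 0 ≤ τ then
    ∑ t ∈ Finset.range (L - τ.toNat),
      a t * (starRingEnd ℂ) (b (t + τ.toNat)) *
        Complex.exp (2 * (Real.pi : ℂ) * Complex.I * ((ν * t : ℤ) : ℂ) / (L : ℂ))
  else
    ∑ t ∈ Finset.range (L - (-τ).toNat),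
      a (t + (-τ).toNat) * (starRingEnd ℂ) (b t) *
        Complex.exp (2 * (Real.pi : ℂ) * Complex.I *
          ((ν * (t + (-τ).toNat) : ℤ) : ℂ) / (L : ℂ))

/-- Butson-type Hadamard matrix `BH(N, r)` given by its exponent matrix `b`:
the matrix `(ω_r^{b_{i,j}})` satisfies `B Bᴴ = N I`. -/
def IsBH (N r : ℕ) (b : ℕ → ℕ → ℤ) : Prop :=
  ∀ i < N, ∀ j < N,
    (∑ k ∈ Finset.range N,
        Complex.exp (2 * (Real.pi : ℂ) * Complex.I * ((b i k - b j k : ℤ) : ℂ) / (r : ℂ)))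
      = if i = j then (N : ℂ) else 0

/-- Construction 2: the sequence `c_m^{(k)}` of length `L`, with
`c_m^{(k)}(n) = ω_r^{b_{a_{k,n}, m}}`. -/
noncomputable def seqC (N r : ℕ) (A : ℕ → ℕ → ZMod N) (b : ℕ → ℕ → ℤ) (k m : ℕ) :
    ℕ → ℂ :=
  fun n => Complex.exp (2 * (Real.pi : ℂ) * Complex.I *
    ((b (A k n).val m : ℤ) : ℂ) / (r : ℂ))

/-- Ambiguity-function sum of the DRCSs `C^{(k1)}` and `C^{(k2)}` of
Construction 2: `AF_{C^{(k1)},C^{(k2)}}(τ,ν) = Σ_{m<N} AF_{c_m^{(k1)},c_m^{(k2)}}(τ,ν)`. -/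
noncomputable def AFsum (L N r : ℕ) (A : ℕ → ℕ → ZMod N) (b : ℕ → ℕ → ℤ)
    (k1 k2 : ℕ) (τ ν : ℤ) : ℂ :=
  ∑ m ∈ Finset.range N, apAF L (seqC N r A b k1 m) (seqC N r A b k2 m) τ ν

/-! ### Auxiliary lemmas -/

lemma abs_exp_unit (q : ℕ) (z : ℤ) :
    ‖Complex.exp (2 * (Real.pi : ℂ) * Complex.I * ((z : ℤ) : ℂ) / (q : ℂ))‖ = 1 := by
  have h : 2 * (Real.pi : ℂ) * Complex.I * ((z : ℤ) : ℂ) / (q : ℂ)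
      = ((2 * Real.pi * (z : ℝ) / (q : ℝ) : ℝ) : ℂ) * Complex.I := by
    push_cast
    ring
  rw [h, Complex.norm_exp_ofReal_mul_I]

lemma mul_conj_exp (r : ℕ) (x y : ℤ) :
    Complex.exp (2 * (Real.pi : ℂ) * Complex.I * ((x : ℤ) : ℂ) / (r : ℂ)) *
      (starRingEnd ℂ) (Complex.exp (2 * (Real.pi : ℂ) * Complex.I * ((y : ℤ) : ℂ) / (r : ℂ)))
    = Complex.exp (2 * (Real.pi : ℂ) * Complex.I * ((x - y : ℤ) : ℂ) / (r : ℂ)) := by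
  rw [← Complex.exp_conj, ← Complex.exp_add]
  congr 1
  simp only [map_div₀, map_mul, Complex.conj_I, Complex.conj_ofNat, Complex.conj_ofReal,
    map_intCast, Complex.conj_natCast]
  push_cast
  ring

lemma innerSum {N r : ℕ} {b : ℕ → ℕ → ℤ} (hB : IsBH N r b) {i j : ℕ}
    (hi : i < N) (hj : j < N) :
    (∑ m ∈ Finset.range N,
      Complex.exp (2 * (Real.pi : ℂ) * Complex.I * ((b i m : ℤ) : ℂ) / (r : ℂ)) *
        (starRingEnd ℂ)
          (Complex.exp (2 * (Real.pi : ℂ) * Complex.I * ((b j m : ℤ) : ℂ) / (r : ℂ))))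
      = if i = j then (N : ℂ) else 0 := by
  rw [← hB i hi j hj]
  exact Finset.sum_congr rfl fun m _ => mul_conj_exp r (b i m) (b j m)

lemma ite_val_eq {N : ℕ} [NeZero N] (x y : ZMod N) :
    (if x.val = y.val then (N : ℂ) else 0) = if x = y then (N : ℂ) else 0 := by
  congr 1
  simp only [eq_iff_iff]
  exact ⟨fun h => ZMod.val_injective N h, fun h => by rw [h]⟩

lemma AFsum_pos (L N r : ℕ) [NeZero N] (A : ℕ → ℕ → ZMod N) (b : ℕ → ℕ → ℤ)
    (hB : IsBH N r b) (k1 k2 : ℕ) (τ ν : ℤ) (hτ : 0 ≤ τ) :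
    AFsum L N r A b k1 k2 τ ν = ∑ t ∈ Finset.range (L - τ.toNat),
      (if A k1 t = A k2 (t + τ.toNat) then (N : ℂ) else 0) *
        Complex.exp (2 * (Real.pi : ℂ) * Complex.I * ((ν * t : ℤ) : ℂ) / (L : ℂ)) := by
  unfold AFsum apAF seqC
  simp only [if_pos hτ]
  rw [Finset.sum_comm]
  refine Finset.sum_congr rfl fun t _ => ?_
  rw [← Finset.sum_mul, innerSum hB (ZMod.val_lt _) (ZMod.val_lt _), ite_val_eq]

lemma AFsum_neg (L N r : ℕ) [NeZero N] (A : ℕ → ℕ → ZMod N) (b : ℕ → ℕ → ℤ)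
    (hB : IsBH N r b) (k1 k2 : ℕ) (τ ν : ℤ) (hτ : ¬ 0 ≤ τ) :
    AFsum L N r A b k1 k2 τ ν = ∑ t ∈ Finset.range (L - (-τ).toNat),
      (if A k1 (t + (-τ).toNat) = A k2 t then (N : ℂ) else 0) *
        Complex.exp (2 * (Real.pi : ℂ) * Complex.I * ((ν * (t + (-τ).toNat) : ℤ) : ℂ) / (L : ℂ)) := by
  unfold AFsum apAF seqC
  simp only [if_neg hτ]
  rw [Finset.sum_comm]
  refine Finset.sum_congr rfl fun t _ => ?_
  rw [← Finset.sum_mul, innerSum hB (ZMod.val_lt _) (ZMod.val_lt _), ite_val_eq]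

lemma geom_zero (L : ℕ) (hL : 0 < L) (ν : ℤ) (hν : ν ≠ 0) (hνL : |ν| < (L : ℤ)) :
    ∑ t ∈ Finset.range L,
      Complex.exp (2 * (Real.pi : ℂ) * Complex.I * ((ν * t : ℤ) : ℂ) / (L : ℂ)) = 0 := by
  have hLC : (L : ℂ) ≠ 0 := Nat.cast_ne_zero.mpr hL.ne'
  have hζ : ∀ t : ℕ, Complex.exp (2 * (Real.pi : ℂ) * Complex.I * ((ν * t : ℤ) : ℂ) / (L : ℂ))
      = (Complex.exp (2 * (Real.pi : ℂ) * Complex.I * (ν : ℂ) / (L : ℂ))) ^ t := by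
    intro t
    rw [← Complex.exp_nat_mul]
    congr 1
    push_cast
    ring
  simp_rw [hζ]
  have hπ : (Real.pi : ℂ) ≠ 0 := Complex.ofReal_ne_zero.mpr Real.pi_ne_zero
  have hζ1 : Complex.exp (2 * (Real.pi : ℂ) * Complex.I * (ν : ℂ) / (L : ℂ)) ≠ 1 := by
    rw [Ne, Complex.exp_eq_one_iff]
    rintro ⟨m, hm⟩
    have hm' : 2 * (Real.pi : ℂ) * Complex.I * (ν : ℂ) = m * (2 * Real.pi * Complex.I) * L :=
      (div_eq_iff hLC).mp hm
    have h2πI : (2 * (Real.pi : ℂ) * Complex.I) ≠ 0 :=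
      mul_ne_zero (mul_ne_zero two_ne_zero hπ) Complex.I_ne_zero
    have hν' : (ν : ℂ) = m * L := by
      apply mul_left_cancel₀ h2πI
      linear_combination hm'
    have hmL : ν = m * L := by exact_mod_cast hν'
    have hm0 : m ≠ 0 := by rintro rfl; simp at hmL; exact hν hmL
    have hfin : (L : ℤ) ≤ |ν| := by
      rw [hmL, abs_mul, abs_of_nonneg (by positivity : (0:ℤ) ≤ (L : ℤ))]
      calc (L : ℤ) = 1 * L := (one_mul _).symm
      _ ≤ |m| * L := mul_le_mul_of_nonneg_right (Int.one_le_abs hm0) (by positivity)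
    linarith
  have hpow : (Complex.exp (2 * (Real.pi : ℂ) * Complex.I * (ν : ℂ) / (L : ℂ))) ^ L = 1 := by
    rw [← Complex.exp_nat_mul]
    have : (L : ℂ) * (2 * (Real.pi : ℂ) * Complex.I * (ν : ℂ) / (L : ℂ))
        = ν * (2 * Real.pi * Complex.I) := by field_simp
    rw [this, Complex.exp_int_mul_two_pi_mul_I]
  rw [geom_sum_eq hζ1, hpow]
  simp

lemma abs_sum_bound (q N M : ℕ) (P : ℕ → Prop) [DecidablePred P] (f : ℕ → ℤ) :
    ‖∑ t ∈ Finset.range M, (if P t then (N : ℂ) else 0) *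
      Complex.exp (2 * (Real.pi : ℂ) * Complex.I * ((f t : ℤ) : ℂ) / (q : ℂ))‖
    ≤ N * ((Finset.range M).filter P).card := by
  calc ‖∑ t ∈ Finset.range M, (if P t then (N : ℂ) else 0) *
      Complex.exp (2 * (Real.pi : ℂ) * Complex.I * ((f t : ℤ) : ℂ) / (q : ℂ))‖
      ≤ ∑ t ∈ Finset.range M, ‖(if P t then (N : ℂ) else 0) *
        Complex.exp (2 * (Real.pi : ℂ) * Complex.I * ((f t : ℤ) : ℂ) / (q : ℂ))‖ :=
      norm_sum_le _ _
    _ = ∑ t ∈ Finset.range M, (if P t then (N : ℝ) else 0) := by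
      refine Finset.sum_congr rfl fun t _ => ?_
      rw [norm_mul, abs_exp_unit, mul_one]
      split <;> simp
    _ = N * ((Finset.range M).filter P).card := by
      rw [← Finset.sum_filter, Finset.sum_const, nsmul_eq_mul, mul_comm]

/-- Key uniqueness consequence of the GQFR conditions for two distinct rows. -/
lemma gqfr_unique {N K L : ℕ} {A : ℕ → ℕ → ZMod N} (hA : IsGQFR N K L A)
    {k1 k2 : ℕ} (h1 : k1 < K) (h2 : k2 < K) (hne : k1 ≠ k2) (d : ℕ)
    {t t' : ℕ} (ht : t + d < L) (ht' : t' + d < L)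
    (e : A k1 t = A k2 (t + d)) (e' : A k1 t' = A k2 (t' + d)) : t = t' := by
  obtain ⟨hC1, hC2⟩ := hA
  by_contra hts
  -- wlog-style: handle both orders via a helper on the smaller one
  have main : ∀ s s' : ℕ, s < s' → s + d < L → s' + d < L →
      A k1 s = A k2 (s + d) → A k1 s' = A k2 (s' + d) → False := by
    intro s s' hlt hs hs' es es'
    by_cases hab : A k1 s = A k1 s'
    · have := hC1 k1 h1 s (by omega) s' (by omega) hab
      omega
    · set m := s' - s with hm
      have hmeq : s + m = s' := by omega
      have := hC2 (A k1 s) (A k1 s') hab m (by omega) (by omega) k1 h1 k2 h2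
        ⟨s, by omega, rfl, by rw [hmeq]⟩
        ⟨s + d, by omega, es.symm, by
          have hdm : s + d + m = s' + d := by omega
          rw [hdm]; exact es'.symm⟩
      exact hne this
  rcases Nat.lt_or_ge t t' with h | h
  · exact main t t' h ht ht' e e'
  · exact main t' t (by omega) ht' ht e' e

/-- Corollary, case IV: with `K = min{p^n, p1^n1}`,
`L = (p^n - 1)(p1^n1 - c)` and `N = p^n p1^n1` (`p`, `p1` primes,
`1 ≤ c < p1^n1 - 1`), the set of Construction 2 is an aperiodic
`(K, p^n p1^n1, (p^n - 1)(p1^n1 - c), p^n p1^n1, Π)`-DRCS set with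
`Π = (-L,L) × (-L,L)`: all relevant AF magnitudes are at most `p^n p1^n1`. -/
theorem stmt15 (p p1 n n1 c r K L N : ℕ)
    (hp : p.Prime) (hp1 : p1.Prime) (hn : 0 < n) (hn1 : 0 < n1)
    (hc1 : 1 ≤ c) (hc2 : c < p1 ^ n1 - 1)
    (hK : K = min (p ^ n) (p1 ^ n1)) (hL : L = (p ^ n - 1) * (p1 ^ n1 - c))
    (hN : N = p ^ n * p1 ^ n1)
    (A : ℕ → ℕ → ZMod N) (hA : IsGQFR N K L A)
    (b : ℕ → ℕ → ℤ) (hB : IsBH N r b) :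
    (∀ k < K, ∀ τ ν : ℤ, |τ| < (L : ℤ) → |ν| < (L : ℤ) → (τ, ν) ≠ (0, 0) →
        ‖AFsum L N r A b k k τ ν‖ ≤ p ^ n * p1 ^ n1) ∧
      (∀ k1 < K, ∀ k2 < K, k1 ≠ k2 → ∀ τ ν : ℤ, |τ| < (L : ℤ) → |ν| < (L : ℤ) →
        ‖AFsum L N r A b k1 k2 τ ν‖ ≤ p ^ n * p1 ^ n1) := by
  have hpn : 2 ≤ p ^ n := (Nat.one_lt_pow hn.ne' hp.one_lt)
  have hp1n : 2 ≤ p1 ^ n1 := (Nat.one_lt_pow hn1.ne' hp1.one_lt)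
  have hN0 : 0 < N := by
    rw [hN]; exact Nat.mul_pos (by omega) (by omega)
  haveI : NeZero N := ⟨hN0.ne'⟩
  have hL0 : 0 < L := by
    rw [hL]; exact Nat.mul_pos (by omega) (by omega)
  have hNR : ((N : ℝ)) = (p : ℝ) ^ n * (p1 : ℝ) ^ n1 := by
    rw [hN]; push_cast; ring
  have hC1 := hA.1
  constructor
  · -- autocorrelation
    intro k hk τ ν hτL hνL hτν
    rcases le_or_gt 0 τ with hτ | hτ
    · rw [AFsum_pos L N r A b hB k k τ ν hτ]
      rcases eq_or_ne τ 0 with rfl | hτ0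
      · -- τ = 0, so ν ≠ 0 : geometric sum vanishes
        have hν0 : ν ≠ 0 := by
          intro h; exact hτν (by rw [h])
        simp only [Int.toNat_zero, Nat.add_zero, Nat.sub_zero, if_pos rfl]
        rw [← Finset.mul_sum, geom_zero L hL0 ν hν0 hνL]
        simp [le_trans, hNR]
        positivity
      · -- τ > 0 : all terms vanish by row-distinctness
        have hd1 : 1 ≤ τ.toNat := by omega
        have hz : (∑ t ∈ Finset.range (L - τ.toNat),
            (if A k t = A k (t + τ.toNat) then (N : ℂ) else 0) *
              Complex.exp (2 * (Real.pi : ℂ) * Complex.I * ((ν * t : ℤ) : ℂ) / (L : ℂ))) = 0 := by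
          refine Finset.sum_eq_zero fun t htm => ?_
          have htL : t + τ.toNat < L := by
            have := Finset.mem_range.mp htm; omega
          rw [if_neg, zero_mul]
          intro e
          have := hC1 k hk t (by omega) (t + τ.toNat) htL e
          omega
        rw [hz]
        simp only [norm_zero]
        positivity
    · -- τ < 0 : all terms vanish by row-distinctness
      rw [AFsum_neg L N r A b hB k k τ ν (not_le.mpr hτ)]
      have hd1 : 1 ≤ (-τ).toNat := by omega
      have hz : (∑ t ∈ Finset.range (L - (-τ).toNat),
          (if A k (t + (-τ).toNat) = A k t then (N : ℂ) else 0) *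
            Complex.exp (2 * (Real.pi : ℂ) * Complex.I *
              ((ν * (t + (-τ).toNat) : ℤ) : ℂ) / (L : ℂ))) = 0 := by
        refine Finset.sum_eq_zero fun t htm => ?_
        have htL : t + (-τ).toNat < L := by
          have := Finset.mem_range.mp htm; omega
        rw [if_neg, zero_mul]
        intro e
        have := hC1 k hk (t + (-τ).toNat) htL t (by omega) e
        omega
      rw [hz]
      simp only [norm_zero]
      positivity
  · -- cross-correlation
    intro k1 hk1 k2 hk2 hne τ ν hτL hνL
    rcases le_or_gt 0 τ with hτ | hτ
    · rw [AFsum_pos L N r A b hB k1 k2 τ ν hτ]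
      have hcard : (((Finset.range (L - τ.toNat)).filter
          (fun t => A k1 t = A k2 (t + τ.toNat))).card) ≤ 1 := by
        rw [Finset.card_le_one]
        intro s hs s' hs'
        simp only [Finset.mem_filter, Finset.mem_range] at hs hs'
        exact gqfr_unique hA hk1 hk2 hne τ.toNat (by omega) (by omega) hs.2 hs'.2
      calc ‖_‖ ≤ (N : ℝ) * (((Finset.range (L - τ.toNat)).filter
            (fun t => A k1 t = A k2 (t + τ.toNat))).card) :=
          abs_sum_bound L N (L - τ.toNat) _ (fun t => ν * t)
        _ ≤ (N : ℝ) * 1 := by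
          apply mul_le_mul_of_nonneg_left _ (by positivity)
          exact_mod_cast hcard
        _ = (p : ℝ) ^ n * (p1 : ℝ) ^ n1 := by rw [mul_one, hNR]
    · rw [AFsum_neg L N r A b hB k1 k2 τ ν (not_le.mpr hτ)]
      have hcard : (((Finset.range (L - (-τ).toNat)).filter
          (fun t => A k1 (t + (-τ).toNat) = A k2 t)).card) ≤ 1 := by
        rw [Finset.card_le_one]
        intro s hs s' hs'
        simp only [Finset.mem_filter, Finset.mem_range] at hs hs'
        exact gqfr_unique hA hk2 hk1 hne.symm (-τ).toNat (by omega) (by omega)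
          hs.2.symm hs'.2.symm
      calc ‖_‖ ≤ (N : ℝ) * (((Finset.range (L - (-τ).toNat)).filter
            (fun t => A k1 (t + (-τ).toNat) = A k2 t)).card) :=
          abs_sum_bound L N (L - (-τ).toNat) _ (fun t => ν * (t + (-τ).toNat))
        _ ≤ (N : ℝ) * 1 := by
          apply mul_le_mul_of_nonneg_left _ (by positivity)
          exact_mod_cast hcard
        _ = (p : ℝ) ^ n * (p1 : ℝ) ^ n1 := by rw [mul_one, hNR]
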